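/- arXiv:2509.09105 — 2 statements merged into one kernel-verified Lean document; each statement's English description precedes it below -/
import Mathlib

section
/- Let $(\lambda_t)_{t\ge 0}$ and $(\varepsilon_t)_{t\ge 0}$ be real sequences and $(c_i)_{i\ge 1}$ a summable real sequence. Then $\lambda_t = \varepsilon_t + \sum_{i=0}^{t-1} c_{t-i}\lambda_i$ for all $t \ge 0$ if and only if $\lambda_t = \varepsilon_t + \sum_{i=0}^{t-1} \psi_{t-i}\varepsilon_i$ for all $t \ge 0$, where $\psi = \sum_{k=1}^\infty c^{*k}$ (assuming this series converges absolutely). -/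
/-!
Since `c^{*k}_m = 0` for `k > m ≥ 1`, each `ψ_m` is a finite sum, and peeling off one factor
of `c` gives `ψ = c + c * ψ` on positive indices. Substituting the MA(∞) sequence into the
AR(∞) recursion and swapping the double sum then shows that it solves the recursion. As the
recursion determines `λ` from `ε` by strong induction, both sides of the equivalence say that
`λ` is the MA(∞) sequence.
-/

open scoped BigOperators

noncomputable section

/-- Convolution of sequences indexed by positive integers (index 0 unused):
`(u*v)_m = ∑_{j=1}^{m-1} u_j v_{m-j}`. -/
def seqConv (u v : ℕ → ℝ) : ℕ → ℝ := fun m => ∑ j ∈ Finset.Ioo 0 m, u j * v (m - j)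

/-- `seqConvPow u k` is the `(k+1)`-fold convolution power `u^{*(k+1)}`. -/
def seqConvPow (u : ℕ → ℝ) : ℕ → ℕ → ℝ
  | 0 => u
  | k + 1 => seqConv u (seqConvPow u k)

open Finset

theorem eq_of_forall_eq_add_sum_range {R : Type*} [NonUnitalNonAssocSemiring R]
    {c eps lam mu : ℕ → R}
    (hlam : ∀ t, lam t = eps t + ∑ i ∈ range t, c (t - i) * lam i)
    (hmu : ∀ t, mu t = eps t + ∑ i ∈ range t, c (t - i) * mu i) : lam = mu := by
  funext t
  induction t using Nat.strong_induction_on with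
  | _ t ih =>
    rw [hlam t, hmu t]
    congr 1
    exact sum_congr rfl fun i hi => by rw [ih i (mem_range.1 hi)]

theorem sum_range_mul_sum_range_eq_sum_seqConv (a b e : ℕ → ℝ) (t : ℕ) :
    ∑ i ∈ range t, a (t - i) * ∑ j ∈ range i, b (i - j) * e j =
      ∑ j ∈ range t, seqConv a b (t - j) * e j := by
  calc ∑ i ∈ range t, a (t - i) * ∑ j ∈ range i, b (i - j) * e j
      = ∑ i ∈ range t, ∑ j ∈ range i, a (t - i) * (b (i - j) * e j) := by
        simp only [mul_sum]
    _ = ∑ j ∈ range t, ∑ i ∈ Ioo j t, a (t - i) * (b (i - j) * e j) :=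
        sum_comm' fun i j => by simp only [mem_range, mem_Ioo]; omega
    _ = ∑ j ∈ range t, seqConv a b (t - j) * e j := by
        refine sum_congr rfl fun j hj => ?_
        rw [seqConv, sum_mul]
        refine sum_nbij' (fun i => t - i) (fun l => t - l) ?_ ?_ ?_ ?_ ?_ <;>
          intro i hi <;> simp only [mem_Ioo, mem_range] at hi hj ⊢
        · omega
        · omega
        · omega
        · omega
        · rw [show t - j - (t - i) = i - j by omega, mul_assoc]

theorem seqConvPow_eq_zero_of_le (c : ℕ → ℝ) {k m : ℕ} (hm : 1 ≤ m) (hmk : m ≤ k) :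
    seqConvPow c k m = 0 := by
  induction k generalizing m with
  | zero => omega
  | succ k ih =>
    refine sum_eq_zero (s := Ioo 0 m) fun j hj => ?_
    rw [mem_Ioo] at hj
    rw [ih (by omega) (by omega), mul_zero]

theorem summable_seqConvPow (c : ℕ → ℝ) {m : ℕ} (hm : 1 ≤ m) :
    Summable fun k => seqConvPow c k m :=
  summable_of_ne_finset_zero (s := range m) fun _ hk =>
    seqConvPow_eq_zero_of_le c hm (by simpa using hk)

/-- The paper's `ψ = ∑_{k ≥ 1} c^{*k}`. -/
def maCoeff (c : ℕ → ℝ) (m : ℕ) : ℝ := ∑' k, seqConvPow c k m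

theorem maCoeff_eq_add_seqConv (c : ℕ → ℝ) {m : ℕ} (hm : 1 ≤ m) :
    maCoeff c m = c m + seqConv c (maCoeff c) m := by
  have hsummable : ∀ j ∈ Ioo 0 m, Summable fun k => c j * seqConvPow c k (m - j) :=
    fun j hj => (summable_seqConvPow c (by rw [mem_Ioo] at hj; omega)).mul_left _
  rw [maCoeff, (summable_seqConvPow c hm).tsum_eq_zero_add]
  simp only [seqConvPow, seqConv, Summable.tsum_finsetSum hsummable, tsum_mul_left, maCoeff]

def maSeq (c eps : ℕ → ℝ) (t : ℕ) : ℝ :=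
  eps t + ∑ i ∈ range t, maCoeff c (t - i) * eps i

theorem maSeq_eq_add_sum_range (c eps : ℕ → ℝ) (t : ℕ) :
    maSeq c eps t = eps t + ∑ i ∈ range t, c (t - i) * maSeq c eps i := by
  simp only [maSeq, mul_add, sum_add_distrib]
  rw [sum_range_mul_sum_range_eq_sum_seqConv, ← sum_add_distrib]
  congr 1
  refine sum_congr rfl fun i hi => ?_
  rw [← add_mul, maCoeff_eq_add_seqConv c (by rw [mem_range] at hi; omega)]

theorem stmt1_general (lam eps c : ℕ → ℝ) :
    (∀ t, lam t = eps t + ∑ i ∈ Finset.range t, c (t - i) * lam i) ↔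
      (∀ t, lam t = eps t + ∑ i ∈ Finset.range t,
        (∑' k, seqConvPow c k (t - i)) * eps i) := by
  change _ ↔ ∀ t, lam t = maSeq c eps t
  constructor
  · intro hAR
    exact congrFun (eq_of_forall_eq_add_sum_range hAR (maSeq_eq_add_sum_range c eps))
  · intro hMA
    obtain rfl : lam = maSeq c eps := funext hMA
    exact maSeq_eq_add_sum_range c eps

/-- AR(∞) / MA(∞) equivalence: `λ_t = ε_t + ∑_{i=0}^{t-1} c_{t-i} λ_i` for all `t`
iff `λ_t = ε_t + ∑_{i=0}^{t-1} ψ_{t-i} ε_i` for all `t`, with `ψ = ∑_{k≥1} c^{*k}`. -/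
theorem stmt1 (lam eps c : ℕ → ℝ) (hc : Summable fun i => |c i|)
    (habs : Summable fun p : ℕ × ℕ => |seqConvPow c p.1 p.2|) :
    (∀ t, lam t = eps t + ∑ i ∈ Finset.range t, c (t - i) * lam i) ↔
      (∀ t, lam t = eps t + ∑ i ∈ Finset.range t,
        (∑' k, seqConvPow c k (t - i)) * eps i) :=
  stmt1_general lam eps c
end
end

section
/- Let $\lambda_t = \omega + \sum_{i=0}^{t-1} a\phi_{t-i}[\lambda_i + \Delta M_i]$ where $\Delta M_i = M_i - M_{i-1}$, $M_{-1} = 0$, with $\phi_i \ge 0$, $\sum \phi_i = 1$, $a \in (0,1)$. Then $\lambda_t = \omega + \omega\sum_{i=0}^{t-1}\psi_{t-i} + \sum_{j=0}^{t-1}\psi_{t-j}\Delta M_j$, where $\psi = \sum_{k=1}^\infty (a\phi)^{*k}$. -/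
/-! Write `ψ = ∑_{k ≥ 1} u^{*k}`. Peeling off the first convolution power gives `ψ = u + u * ψ`.
Substituting this into the moving-average expression `w + ∑_{i<t} ψ_{t-i} (w + e_i)` shows that it
satisfies the autoregressive recursion `x_t = w + ∑_{i<t} u_{t-i} (x_i + e_i)`, whose solution is
determined by strong induction on `t`. -/

open scoped BigOperators

noncomputable section

open Finset

def convPowSum (u : ℕ → ℝ) (m : ℕ) : ℝ := ∑' k, seqConvPow u k m

theorem convPowSum_eq_add_seqConv {u : ℕ → ℝ} (hu : ∀ m, Summable fun k => seqConvPow u k m)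
    (m : ℕ) : convPowSum u m = u m + seqConv u (convPowSum u) m := by
  rw [convPowSum, (hu m).tsum_eq_zero_add]
  congr 1
  calc ∑' k, seqConvPow u (k + 1) m
      = ∑' k, ∑ j ∈ Ioo 0 m, u j * seqConvPow u k (m - j) := rfl
    _ = ∑ j ∈ Ioo 0 m, ∑' k, u j * seqConvPow u k (m - j) :=
        Summable.tsum_finsetSum fun j _ => (hu (m - j)).mul_left (u j)
    _ = seqConv u (convPowSum u) m := sum_congr rfl fun j _ => tsum_mul_left

theorem sum_range_sum_Ioo_sub {M : Type*} [AddCommMonoid M] (t : ℕ) (f : ℕ → ℕ → M) :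
    ∑ i ∈ range t, ∑ j ∈ Ioo 0 (t - i), f i j = ∑ i ∈ range t, ∑ j ∈ range i, f j (t - i) := by
  rw [sum_sigma', sum_sigma']
  refine sum_nbij' (fun p => ⟨t - p.2, p.1⟩) (fun p => ⟨p.2, t - p.1⟩) ?_ ?_ ?_ ?_ ?_ <;>
    rintro ⟨i, j⟩ hp <;>
    simp only [mem_sigma, mem_range, mem_Ioo] at hp ⊢
  all_goals first | omega | rw [Nat.sub_sub_self (by omega)]

theorem sum_convPowSum_mul {u : ℕ → ℝ} (hu : ∀ m, Summable fun k => seqConvPow u k m)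
    (c : ℕ → ℝ) (t : ℕ) :
    ∑ i ∈ range t, convPowSum u (t - i) * c i
      = ∑ i ∈ range t, u (t - i) * (c i + ∑ j ∈ range i, convPowSum u (i - j) * c j) := by
  simp only [convPowSum_eq_add_seqConv hu (t - _), add_mul, mul_add, sum_add_distrib]
  congr 1
  simp only [seqConv, sum_mul, mul_sum]
  rw [sum_range_sum_Ioo_sub]
  refine sum_congr rfl fun i hi => sum_congr rfl fun j hj => ?_
  rw [mem_range] at hi hj
  rw [show t - j - (t - i) = i - j by omega]
  ring

theorem eq_convPowSum_of_recursion {u : ℕ → ℝ} (hu : ∀ m, Summable fun k => seqConvPow u k m)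
    {w : ℝ} {x e : ℕ → ℝ} (hx : ∀ t, x t = w + ∑ i ∈ range t, u (t - i) * (x i + e i))
    (t : ℕ) : x t = w + ∑ i ∈ range t, convPowSum u (t - i) * (w + e i) := by
  induction t using Nat.strong_induction_on with
  | _ t ih =>
    rw [hx t, sum_convPowSum_mul hu]
    refine congrArg (w + ·) (sum_congr rfl fun i hi => ?_)
    rw [ih i (mem_range.mp hi)]
    ring

theorem stmt2_general (φ : ℕ → ℝ)
    (a w : ℝ)
    (lam ΔM : ℕ → ℝ)
    (hψ : ∀ m, Summable fun k => seqConvPow (fun i => a * φ i) k m)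
    (hlam : ∀ t, lam t = w + ∑ i ∈ Finset.range t, a * φ (t - i) * (lam i + ΔM i)) :
    ∀ t, lam t = w
        + w * ∑ i ∈ Finset.range t, (∑' k, seqConvPow (fun i => a * φ i) k (t - i))
        + ∑ j ∈ Finset.range t, (∑' k, seqConvPow (fun i => a * φ i) k (t - j)) * ΔM j := by
  intro t
  rw [eq_convPowSum_of_recursion hψ hlam t, mul_sum, add_assoc, ← sum_add_distrib]
  simp only [convPowSum, mul_add, mul_comm w]

theorem stmt2 (φ : ℕ → ℝ) (hφ0 : φ 0 = 0) (hφpos : ∀ i, 0 ≤ φ i)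
    (hφsum : Summable φ) (hφ1 : ∑' i, φ i = 1)
    (a w : ℝ) (ha : a ∈ Set.Ioo (0 : ℝ) 1)
    (M lam ΔM : ℕ → ℝ)
    (hΔM : ∀ i, ΔM i = M i - if i = 0 then 0 else M (i - 1))
    (hψ : ∀ m, Summable fun k => seqConvPow (fun i => a * φ i) k m)
    (hlam : ∀ t, lam t = w + ∑ i ∈ Finset.range t, a * φ (t - i) * (lam i + ΔM i)) :
    ∀ t, lam t = w
        + w * ∑ i ∈ Finset.range t, (∑' k, seqConvPow (fun i => a * φ i) k (t - i))
        + ∑ j ∈ Finset.range t, (∑' k, seqConvPow (fun i => a * φ i) k (t - j)) * ΔM j :=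
  stmt2_general φ a w lam ΔM hψ hlam
end
end
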